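/- arXiv:2405.03949 — 4 statements merged into one kernel-verified Lean document; each statement's English description precedes it below -/
import Mathlib

section
/- With the local objective L_j(θ; R̄_{−j}) = −Tr(R_j⁺(θ)) + (q_j/2)‖R_j(θ)‖_F² + (1−q_j)·Tr(R_j(θ) R̄_{−j}), where R̄_{−j} is treated as constant in θ, if R̄_{−j} = R_{−j}(θ) := (1/(1−q_j)) ∑_{j'≠j} q_{j'} R_{j'}(θ), then ∇_θ L(θ) = ∑_{j=1}^J q_j ∇_θ L_j(θ; R̄_{−j}), where L(θ) = −∑_j q_j Tr(R_j⁺(θ)) + (1/2)‖∑_j q_j R_j(θ)‖_F² is the global objective. -/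
/-!
All derivatives are linear in the entrywise derivatives `dRⱼ` of the `Rⱼ` (and of the `Rⱼ⁺`),
through the pairing `⟨A, dR⟩ = ∑ᵢₖ Aᵢₖ dRᵢₖ`. With `S = ∑ⱼ qⱼ Rⱼ`, the quadratic global term has
derivative `⟨S, ∑ⱼ qⱼ dRⱼ⟩`. In the `j`-th local objective the self term contributes
`qⱼ ⟨Rⱼ, dRⱼ⟩` and the stop-gradient cross term contributes `tr(dRⱼ ∑_{j'≠j} q_{j'} R_{j'})`, which
is `⟨∑_{j'≠j} q_{j'} R_{j'}, dRⱼ⟩` because the `R_{j'}` are symmetric. Together they give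
`⟨S, dRⱼ⟩`, and weighting by `qⱼ` and summing recovers the global gradient.
-/

noncomputable section

/-- Squared Frobenius norm of a real matrix. -/
def frobSq {H : ℕ} (M : Matrix (Fin H) (Fin H) ℝ) : ℝ := ∑ i, ∑ j, (M i j) ^ 2

open Finset Matrix

namespace Matrix

variable {m n R M : Type*} [Fintype m] [Fintype n] [CommSemiring R] [AddCommMonoid M] [Module R M]

variable (R M) in
def frobeniusPairing : Matrix m n R →ₗ[R] Matrix m n M →ₗ[R] M :=
  LinearMap.mk₂ R (fun A D => ∑ i, ∑ k, A i k • D i k)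
    (fun _ _ _ => by simp only [add_apply, add_smul, sum_add_distrib])
    (fun _ _ _ => by simp only [smul_apply, smul_eq_mul, mul_smul, smul_sum])
    (fun _ _ _ => by simp only [add_apply, smul_add, sum_add_distrib])
    (fun _ _ _ => by
      simp only [smul_sum]
      exact sum_congr rfl fun _ _ => sum_congr rfl fun _ _ => smul_comm _ _ _)

theorem frobeniusPairing_apply (A : Matrix m n R) (D : Matrix m n M) :
    frobeniusPairing R M A D = ∑ i, ∑ k, A i k • D i k :=
  rfl

end Matrix

section EntrywiseDerivative

variable {E : Type*} [NormedAddCommGroup E] [NormedSpace ℝ E] {m n : Type*}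

/-- Matrices carry no canonical norm, so differentiability of a matrix-valued map is expressed
through its entries; `D i k` is the derivative of the `(i, k)` entry. -/
def HasEntrywiseFDerivAt (F : E → Matrix m n ℝ) (D : Matrix m n (E →L[ℝ] ℝ)) (x : E) : Prop :=
  ∀ i k, HasFDerivAt (fun θ => F θ i k) (D i k) x

namespace HasEntrywiseFDerivAt

variable {x : E}

theorem sum_smul {ι : Type*} {F : ι → E → Matrix m n ℝ} {D : ι → Matrix m n (E →L[ℝ] ℝ)}
    (s : Finset ι) (c : ι → ℝ) (h : ∀ j ∈ s, HasEntrywiseFDerivAt (F j) (D j) x) :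
    HasEntrywiseFDerivAt (fun θ => ∑ j ∈ s, c j • F j θ) (∑ j ∈ s, c j • D j) x := by
  intro i k
  simp only [Matrix.sum_apply, Matrix.smul_apply]
  exact HasFDerivAt.fun_sum fun j hj => (h j hj i k).fun_const_smul (c j)

theorem trace [Fintype n] {F : E → Matrix n n ℝ} {D : Matrix n n (E →L[ℝ] ℝ)}
    (h : HasEntrywiseFDerivAt F D x) : HasFDerivAt (fun θ => (F θ).trace) D.trace x :=
  HasFDerivAt.fun_sum fun i _ => h i i

theorem trace_mul_right [Fintype m] [Fintype n] {F : E → Matrix m n ℝ}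
    {D : Matrix m n (E →L[ℝ] ℝ)} (h : HasEntrywiseFDerivAt F D x) (C : Matrix n m ℝ) :
    HasFDerivAt (fun θ => (F θ * C).trace) (frobeniusPairing ℝ _ Cᵀ D) x := by
  simp only [Matrix.trace, diag_apply, mul_apply]
  exact HasFDerivAt.fun_sum fun i _ => HasFDerivAt.fun_sum fun k _ => (h i k).mul_const (C k i)

theorem frobSq {H : ℕ} {F : E → Matrix (Fin H) (Fin H) ℝ}
    {D : Matrix (Fin H) (Fin H) (E →L[ℝ] ℝ)} (h : HasEntrywiseFDerivAt F D x) :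
    HasFDerivAt (fun θ => frobSq (F θ)) ((2 : ℝ) • frobeniusPairing ℝ _ (F x) D) x := by
  refine (HasFDerivAt.fun_sum fun i _ => HasFDerivAt.fun_sum fun k _ => (h i k).pow 2).congr_fderiv ?_
  simp [frobeniusPairing_apply, smul_sum, smul_smul]

end HasEntrywiseFDerivAt

end EntrywiseDerivative

section LeaveOneOut

variable {ι V : Type*} [Fintype ι] [DecidableEq ι] [AddCommGroup V] [Module ℝ V]

/-- The paper's `R̄₋ⱼ = (1 - qⱼ)⁻¹ ∑_{j' ≠ j} q_{j'} R_{j'}`. -/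
def leaveOneOutMean (q : ι → ℝ) (v : ι → V) (j : ι) : V :=
  (1 - q j)⁻¹ • ∑ j' ∈ univ.erase j, q j' • v j'

theorem smul_add_smul_leaveOneOutMean {q : ι → ℝ} {j : ι} (hq : q j ≠ 1) (v : ι → V) :
    q j • v j + (1 - q j) • leaveOneOutMean q v j = ∑ j', q j' • v j' := by
  rw [leaveOneOutMean, smul_smul, mul_inv_cancel₀ (sub_ne_zero.2 hq.symm), one_smul,
    add_sum_erase univ (fun j' => q j' • v j') (mem_univ j)]

theorem Matrix.IsSymm.leaveOneOutMean {m : Type*} {A : ι → Matrix m m ℝ} (h : ∀ j, (A j).IsSymm)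
    (q : ι → ℝ) (j : ι) : (leaveOneOutMean q A j).IsSymm := by
  simp only [Matrix.IsSymm, _root_.leaveOneOutMean, transpose_smul, transpose_sum, (h _).eq]

theorem Matrix.frobeniusPairing_smul_add_leaveOneOutMean {m M : Type*} [Fintype m]
    [AddCommGroup M] [Module ℝ M] {q : ι → ℝ} {j : ι} (hq : q j ≠ 1) {A : ι → Matrix m m ℝ}
    (hA : ∀ j, (A j).IsSymm) (D : Matrix m m M) :
    q j • frobeniusPairing ℝ M (A j) D
        + (1 - q j) • frobeniusPairing ℝ M (leaveOneOutMean q A j)ᵀ D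
      = frobeniusPairing ℝ M (∑ j', q j' • A j') D := by
  rw [(IsSymm.leaveOneOutMean hA q j).eq, ← smul_add_smul_leaveOneOutMean hq A, map_add,
    map_smul, map_smul, LinearMap.add_apply, LinearMap.smul_apply, LinearMap.smul_apply]

end LeaveOneOut

theorem gradient_alignment_general {J H P : ℕ}
    (q : Fin J → ℝ) (hqlt : ∀ j, q j < 1)
    (Rp R : Fin J → EuclideanSpace ℝ (Fin P) → Matrix (Fin H) (Fin H) ℝ)
    (hRp : ∀ j i k, Differentiable ℝ fun θ => Rp j θ i k)
    (hR : ∀ j i k, Differentiable ℝ fun θ => R j θ i k)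
    (hsym : ∀ j θ, (R j θ).IsSymm)
    (θ0 : EuclideanSpace ℝ (Fin P)) :
    fderiv ℝ (fun θ => -(∑ j, q j * (Rp j θ).trace) + (1 / 2) * frobSq (∑ j, q j • R j θ)) θ0
      = ∑ j, q j • fderiv ℝ (fun θ =>
          -(Rp j θ).trace + (q j / 2) * frobSq (R j θ)
            + (1 - q j) *
              (R j θ * ((1 - q j)⁻¹ • ∑ j' ∈ Finset.univ.erase j, q j' • R j' θ0)).trace) θ0 := by
  have hD j : HasEntrywiseFDerivAt (R j) (of fun i k => fderiv ℝ (fun θ => R j θ i k) θ0) θ0 :=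
    fun i k => (hR j i k θ0).hasFDerivAt
  have hDp j : HasEntrywiseFDerivAt (Rp j) (of fun i k => fderiv ℝ (fun θ => Rp j θ i k) θ0) θ0 :=
    fun i k => (hRp j i k θ0).hasFDerivAt
  have hglobal :=
    (HasFDerivAt.fun_sum (u := univ) fun j _ => (hDp j).trace.const_mul (q j)).fun_neg.fun_add
      ((HasEntrywiseFDerivAt.sum_smul univ q fun j _ => hD j).frobSq.const_mul (1 / 2))
  have hlocal j := ((hDp j).trace.fun_neg.fun_add ((hD j).frobSq.const_mul (q j / 2))).fun_add
    (((hD j).trace_mul_right (leaveOneOutMean q (R · θ0) j)).const_mul (1 - q j))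
  have half_smul_two_smul (c : ℝ) (y : EuclideanSpace ℝ (Fin P) →L[ℝ] ℝ) :
      (c / 2) • (2 : ℝ) • y = c • y := by
    rw [smul_smul, div_mul_cancel₀ c two_ne_zero]
  simp only [← leaveOneOutMean.eq_1, hglobal.fderiv, (hlocal _).fderiv]
  simp_rw [half_smul_two_smul, one_smul, add_assoc,
    frobeniusPairing_smul_add_leaveOneOutMean (hqlt _).ne (hsym · θ0)]
  simp only [smul_add, smul_neg, sum_add_distrib, sum_neg_distrib, map_sum, map_smul]

/-- Gradient alignment: with the stop-gradient local objectives
`L_j(θ; R̄_{−j}) = −Tr(R_j⁺(θ)) + (q_j/2)‖R_j(θ)‖_F² + (1−q_j) Tr(R_j(θ) R̄_{−j})`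
evaluated at `R̄_{−j} = R_{−j}(θ₀) = (1/(1−q_j)) ∑_{j'≠j} q_{j'} R_{j'}(θ₀)`,
the gradient of the global objective
`L(θ) = −∑_j q_j Tr(R_j⁺(θ)) + (1/2)‖∑_j q_j R_j(θ)‖_F²` at `θ₀` equals
`∑_j q_j ∇L_j(θ₀; R̄_{−j})`. -/
theorem gradient_alignment {J H P : ℕ}
    (q : Fin J → ℝ) (hq0 : ∀ j, 0 ≤ q j) (hq1 : ∑ j, q j = 1) (hqlt : ∀ j, q j < 1)
    (Rp R : Fin J → EuclideanSpace ℝ (Fin P) → Matrix (Fin H) (Fin H) ℝ)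
    (hRp : ∀ j i k, Differentiable ℝ fun θ => Rp j θ i k)
    (hR : ∀ j i k, Differentiable ℝ fun θ => R j θ i k)
    (hsym : ∀ j θ, (R j θ).IsSymm)
    (θ0 : EuclideanSpace ℝ (Fin P)) :
    fderiv ℝ (fun θ => -(∑ j, q j * (Rp j θ).trace) + (1 / 2) * frobSq (∑ j, q j • R j θ)) θ0
      = ∑ j, q j • fderiv ℝ (fun θ =>
          -(Rp j θ).trace + (q j / 2) * frobSq (R j θ)
            + (1 - q j) *
              (R j θ * ((1 - q j)⁻¹ • ∑ j' ∈ Finset.univ.erase j, q j' • R j' θ0)).trace) θ0 :=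
  gradient_alignment_general q hqlt Rp R hRp hR hsym θ0
end
end

section
/- If a randomized mechanism M satisfies (α, ε)-Rényi differential privacy for some α > 1, then M satisfies (ε + log(1/δ)/(α−1), δ)-differential privacy for every δ ∈ (0,1). -/
open MeasureTheory

noncomputable section

/-- `(α, ε)`-Rényi-divergence bound between two measures `Pd` and `Q`:
`D_α(Pd‖Q) = (1/(α−1)) log E_Q[(dPd/dQ)^α] ≤ ε`, encoded (for `α > 1`) as
`∫⁻ (dPd/dQ)^α dQ ≤ exp((α−1) ε)`. -/
def RenyiBound {Y : Type*} [MeasurableSpace Y] (α ε : ℝ) (Pd Q : Measure Y) : Prop :=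
  ∫⁻ y, Pd.rnDeriv Q y ^ α ∂Q ≤ ENNReal.ofReal (Real.exp ((α - 1) * ε))

/-!
Write `f = dP/dQ` and split a measurable set `S` along `{f ≤ t}` and `{t < f}`. On the first
part `P ≤ t • Q`. On the second, `f · t^(α-1) ≤ f^α`, so the Rényi bound makes its `P`-mass at
most `exp((α-1)ε) / t^(α-1)`, a Markov-type tail estimate. The choice
`t = exp(ε + log(1/δ)/(α-1))` makes this tail equal to `δ`.
-/

open scoped ENNReal

section

variable {Y : Type*} [MeasurableSpace Y]

theorem setLIntegral_lt_mul_rpow_le_lintegral_rpow (μ : Measure Y) {f : Y → ℝ≥0∞}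
    (hf : Measurable f) (t : ℝ≥0∞) {β : ℝ} (hβ : 0 ≤ β) :
    (∫⁻ y in {y | t < f y}, f y ∂μ) * t ^ β ≤ ∫⁻ y, f y ^ (1 + β) ∂μ := by
  have hpoint : ∀ y ∈ {y | t < f y}, f y * t ^ β ≤ f y ^ (1 + β) := fun y hy => by
    rw [ENNReal.rpow_add_of_nonneg _ _ zero_le_one hβ, ENNReal.rpow_one]
    exact mul_le_mul_right (ENNReal.rpow_le_rpow (le_of_lt hy) hβ) _
  calc (∫⁻ y in {y | t < f y}, f y ∂μ) * t ^ β
      = ∫⁻ y in {y | t < f y}, f y * t ^ β ∂μ := (lintegral_mul_const _ hf).symm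
    _ ≤ ∫⁻ y in {y | t < f y}, f y ^ (1 + β) ∂μ :=
        setLIntegral_mono' (measurableSet_lt measurable_const hf) hpoint
    _ ≤ ∫⁻ y, f y ^ (1 + β) ∂μ := setLIntegral_le_lintegral _ _

theorem measure_le_mul_add_setLIntegral_rnDeriv_lt {P Q : Measure Y}
    [P.HaveLebesgueDecomposition Q] (hPQ : P ≪ Q) {S : Set Y} (hS : MeasurableSet S)
    (t : ℝ≥0∞) :
    P S ≤ t * Q S + ∫⁻ y in {y | t < P.rnDeriv Q y}, P.rnDeriv Q y ∂Q := by
  set f := P.rnDeriv Q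
  set A := {y | t < f y}
  have hA : MeasurableSet A := measurableSet_lt measurable_const (Measure.measurable_rnDeriv P Q)
  have hlow : ∫⁻ y in S \ A, f y ∂Q ≤ t * Q S :=
    calc ∫⁻ y in S \ A, f y ∂Q ≤ ∫⁻ _ in S \ A, t ∂Q :=
          setLIntegral_mono' (hS.diff hA) fun _ hy => not_lt.mp hy.2
      _ = t * Q (S \ A) := setLIntegral_const _ _
      _ ≤ t * Q S := mul_le_mul_right (measure_mono Set.sdiff_subset) _
  calc P S = ∫⁻ y in S, f y ∂Q := (Measure.setLIntegral_rnDeriv' hPQ hS).symm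
    _ = ∫⁻ y in S ∩ A, f y ∂Q + ∫⁻ y in S \ A, f y ∂Q := (lintegral_inter_add_sdiff _ _ hA).symm
    _ ≤ ∫⁻ y in A, f y ∂Q + t * Q S :=
        add_le_add (lintegral_mono_set Set.inter_subset_right) hlow
    _ = t * Q S + ∫⁻ y in A, f y ∂Q := add_comm _ _

theorem RenyiBound.measure_le_mul_add {α ε : ℝ} (hα : 1 ≤ α) {P Q : Measure Y}
    [P.HaveLebesgueDecomposition Q] (hPQ : P ≪ Q) (hR : RenyiBound α ε P Q)
    {S : Set Y} (hS : MeasurableSet S) {t : ℝ} (ht : 0 < t) :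
    P S ≤ ENNReal.ofReal t * Q S + ENNReal.ofReal (Real.exp ((α - 1) * ε) / t ^ (α - 1)) := by
  refine (measure_le_mul_add_setLIntegral_rnDeriv_lt hPQ hS _).trans (add_le_add le_rfl ?_)
  have htβ : 0 < t ^ (α - 1) := Real.rpow_pos_of_pos ht _
  have htail := setLIntegral_lt_mul_rpow_le_lintegral_rpow Q (Measure.measurable_rnDeriv P Q)
    (ENNReal.ofReal t) (sub_nonneg.mpr hα)
  rw [add_sub_cancel, ENNReal.ofReal_rpow_of_pos ht] at htail
  rw [ENNReal.ofReal_div_of_pos htβ]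
  exact ENNReal.le_div_iff_mul_le (Or.inl (ENNReal.ofReal_pos.mpr htβ).ne')
    (Or.inl ENNReal.ofReal_ne_top) |>.mpr (htail.trans hR)

end

theorem exp_div_exp_add_log_div_rpow {α ε δ : ℝ} (hα : 1 < α) (hδ : 0 < δ) :
    Real.exp ((α - 1) * ε) / Real.exp (ε + Real.log (1 / δ) / (α - 1)) ^ (α - 1) = δ := by
  have hα1 : α - 1 ≠ 0 := (sub_pos.mpr hα).ne'
  rw [← Real.exp_mul, ← Real.exp_sub, one_div, Real.log_inv]
  convert Real.exp_log hδ using 2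
  field_simp
  ring

/-- RDP-to-DP conversion: if a mechanism `M` is `(α,ε)`-Rényi differentially
private for some `α > 1`, then for every `δ ∈ (0,1)` it is
`(ε + log(1/δ)/(α−1), δ)`-differentially private. -/
theorem rdp_implies_dp {X Y : Type*} [MeasurableSpace Y]
    (M : X → Measure Y) (Neighbor : X → X → Prop)
    (hprob : ∀ x, IsProbabilityMeasure (M x))
    (α ε : ℝ) (hα : 1 < α)
    (hAC : ∀ x x', Neighbor x x' → M x ≪ M x')
    (hRDP : ∀ x x', Neighbor x x' → RenyiBound α ε (M x) (M x'))
    (δ : ℝ) (hδ : δ ∈ Set.Ioo (0 : ℝ) 1) :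
    ∀ x x', Neighbor x x' → ∀ S : Set Y, MeasurableSet S →
      M x S ≤ ENNReal.ofReal (Real.exp (ε + Real.log (1 / δ) / (α - 1))) * M x' S
        + ENNReal.ofReal δ := by
  intro x x' hN S hS
  have := hprob x
  have := hprob x'
  have h := (hRDP x x' hN).measure_le_mul_add hα.le (hAC x x' hN) hS
    (Real.exp_pos (ε + Real.log (1 / δ) / (α - 1)))
  rwa [exp_div_exp_add_log_div_rpow hα hδ.1] at h
end
end

section
/- Let f: X → ℝⁿ have ℓ2 sensitivity W (i.e., ‖f(D) − f(D')‖₂ ≤ W for all neighboring D, D'). Then the Gaussian mechanism G(D) = f(D) + N(0, σ² I_n) satisfies (α, α W²/(2σ²))-Rényi differential privacy for every α > 1. -/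
open MeasureTheory ProbabilityTheory
open scoped ENNReal NNReal

noncomputable section

private lemma lintegral_pi_prod {n : ℕ} (μ : Fin n → Measure ℝ) [∀ i, SigmaFinite (μ i)]
    (f : Fin n → ℝ → ℝ≥0∞) (hf : ∀ i, Measurable (f i)) :
    ∫⁻ x, ∏ i, f i (x i) ∂Measure.pi μ = ∏ i, ∫⁻ y, f i y ∂μ i := by
  induction n with
  | zero =>
    simp [Measure.pi_of_empty, lintegral_dirac]
  | succ n ih =>
    have hF : Measurable fun x : Fin (n+1) → ℝ => ∏ i, f i (x i) :=
      Finset.measurable_prod _ fun i _ => (hf i).comp (measurable_pi_apply i)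
    rw [← ((measurePreserving_piFinSuccAbove μ 0).symm).lintegral_comp hF]
    simp_rw [MeasurableEquiv.piFinSuccAbove_symm_apply, Fin.insertNthEquiv,
      Fin.prod_univ_succ, Fin.insertNth_zero, Equiv.coe_fn_mk,
      Fin.cons_zero, Fin.cons_succ, Fin.zero_succAbove, cast_eq]
    have hg : Measurable fun y : Fin n → ℝ => ∏ i : Fin n, f i.succ (y i) :=
      Finset.measurable_prod _ fun i _ => (hf i.succ).comp (measurable_pi_apply i)
    rw [lintegral_prod_mul (hf 0).aemeasurable hg.aemeasurable,
      ih (fun i => μ i.succ) (fun i => f i.succ) (fun i => hf i.succ)]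

private lemma pi_withDensity {n : ℕ} (μ : Fin n → Measure ℝ) [∀ i, SigmaFinite (μ i)]
    (f : Fin n → ℝ → ℝ≥0∞) (hf : ∀ i, Measurable (f i))
    [∀ i, SigmaFinite ((μ i).withDensity (f i))] :
    Measure.pi (fun i => (μ i).withDensity (f i)) =
      (Measure.pi μ).withDensity (fun x => ∏ i, f i (x i)) := by
  refine Measure.pi_eq fun s hs => ?_
  rw [withDensity_apply _ (MeasurableSet.univ_pi hs)]
  have h1 : ∀ x : Fin n → ℝ, Set.indicator (Set.pi Set.univ s) (fun x => ∏ i, f i (x i)) x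
      = ∏ i, Set.indicator (s i) (f i) (x i) := by
    intro x
    by_cases hx : x ∈ Set.pi Set.univ s
    · rw [Set.indicator_of_mem hx]
      exact Finset.prod_congr rfl fun i _ =>
        (Set.indicator_of_mem (hx i (Set.mem_univ i)) _).symm
    · rw [Set.indicator_of_notMem hx]
      obtain ⟨j, hj⟩ : ∃ j, x j ∉ s j := by
        by_contra h
        exact hx fun i _ => not_not.mp (not_exists.mp h i)
      exact (Finset.prod_eq_zero (Finset.mem_univ j) (Set.indicator_of_notMem hj _)).symm
  calc ∫⁻ a in Set.univ.pi s, ∏ i, f i (a i) ∂Measure.pi μ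
      = ∫⁻ a, ∏ i, (s i).indicator (f i) (a i) ∂Measure.pi μ := by
        rw [← lintegral_indicator (MeasurableSet.univ_pi hs) _]
        exact lintegral_congr h1
    _ = ∏ i, ∫⁻ y, (s i).indicator (f i) y ∂μ i :=
        lintegral_pi_prod μ _ (fun i => (hf i).indicator (hs i))
    _ = ∏ i, ((μ i).withDensity (f i)) (s i) := by
        refine Finset.prod_congr rfl fun i _ => ?_
        rw [lintegral_indicator (hs i) _, withDensity_apply _ (hs i)]

private lemma gaussian_ratio_pow {σ : ℝ} (hσ : 0 < σ) (α m m' y : ℝ) :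
    gaussianPDFReal m' (σ^2).toNNReal y *
      (gaussianPDFReal m (σ^2).toNNReal y / gaussianPDFReal m' (σ^2).toNNReal y) ^ α
    = Real.exp (α * (α - 1) * (m - m')^2 / (2 * σ^2)) *
      gaussianPDFReal (m' + α * (m - m')) (σ^2).toNNReal y := by
  have hv : (((σ^2).toNNReal : ℝ≥0) : ℝ) = σ^2 := Real.coe_toNNReal _ (sq_nonneg σ)
  have h2 : (0:ℝ) < 2 * σ^2 := by positivity
  have hc : 0 < (Real.sqrt (2 * Real.pi * σ^2))⁻¹ := by positivity
  simp only [gaussianPDFReal, hv]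
  rw [mul_div_mul_left _ _ (ne_of_gt hc), ← Real.exp_sub, ← Real.exp_mul,
    mul_comm ((Real.sqrt (2 * Real.pi * σ^2))⁻¹) (Real.exp (-(y - m')^2 / (2*σ^2))),
    mul_assoc, mul_comm, mul_assoc, ← Real.exp_add, mul_left_comm, ← Real.exp_add]
  congr 2
  field_simp
  ring

private lemma gaussian_pdf_ratio_pow_ennreal {σ : ℝ} (hσ : 0 < σ) (α m m' y : ℝ) :
    gaussianPDF m' (σ^2).toNNReal y *
      (gaussianPDF m (σ^2).toNNReal y / gaussianPDF m' (σ^2).toNNReal y) ^ α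
    = ENNReal.ofReal (Real.exp (α * (α - 1) * (m - m')^2 / (2 * σ^2))) *
      gaussianPDF (m' + α * (m - m')) (σ^2).toNNReal y := by
  have hv : (σ^2).toNNReal ≠ 0 := by
    simp only [ne_eq, Real.toNNReal_eq_zero, not_le]
    positivity
  have hP : 0 < gaussianPDFReal m (σ^2).toNNReal y := gaussianPDFReal_pos _ _ _ hv
  have hQ : 0 < gaussianPDFReal m' (σ^2).toNNReal y := gaussianPDFReal_pos _ _ _ hv
  simp only [gaussianPDF]
  rw [← ENNReal.ofReal_div_of_pos hQ, ENNReal.ofReal_rpow_of_pos (div_pos hP hQ),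
    ← ENNReal.ofReal_mul hQ.le, gaussian_ratio_pow hσ α m m' y,
    ENNReal.ofReal_mul (Real.exp_nonneg _)]

/-- Gaussian mechanism of RDP: if `f : X → ℝⁿ` has ℓ2 sensitivity `W` on
neighboring datasets, then the Gaussian mechanism `G(D) = f(D) + N(0, σ² Iₙ)`
is `(α, α W² / (2σ²))`-RDP for every `α > 1`. -/
theorem gaussian_mechanism_rdp {X : Type*} {n : ℕ}
    (Neighbor : X → X → Prop) (f : X → Fin n → ℝ) (W : ℝ) (σ : ℝ) (hσ : 0 < σ)
    (hsens : ∀ D D', Neighbor D D' → Real.sqrt (∑ i, (f D i - f D' i) ^ 2) ≤ W) :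
    ∀ α : ℝ, 1 < α → ∀ D D', Neighbor D D' →
      RenyiBound α (α * W ^ 2 / (2 * σ ^ 2))
        (Measure.pi fun i => gaussianReal (f D i) (σ ^ 2).toNNReal)
        (Measure.pi fun i => gaussianReal (f D' i) (σ ^ 2).toNNReal) := by
  intro α hα D D' hDD'
  have hα0 : (0:ℝ) < α := lt_trans one_pos hα
  set v : ℝ≥0 := (σ^2).toNNReal with hvdef
  have hv : v ≠ 0 := by
    simp only [hvdef, ne_eq, Real.toNNReal_eq_zero, not_le]
    positivity
  set m : Fin n → ℝ := f D
  set m' : Fin n → ℝ := f D'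
  set P : Measure (Fin n → ℝ) := Measure.pi fun i => gaussianReal (m i) v with hPdef
  set Q : Measure (Fin n → ℝ) := Measure.pi fun i => gaussianReal (m' i) v with hQdef
  set Wm : Measure (Fin n → ℝ) := Measure.pi fun _ => (volume : Measure ℝ) with hWdef
  have hpos : ∀ (μ0 : ℝ) y, gaussianPDF μ0 v y ≠ 0 := fun μ0 y => (gaussianPDF_pos μ0 hv y).ne'
  have htop : ∀ (μ0 : ℝ) y, gaussianPDF μ0 v y ≠ ∞ := fun μ0 y => ENNReal.ofReal_ne_top
  haveI : ∀ (c : Fin n → ℝ) i, SigmaFinite ((volume : Measure ℝ).withDensity (gaussianPDF (c i) v)) :=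
    fun c i => by rw [← gaussianReal_of_var_ne_zero (c i) hv]; infer_instance
  have hpi : ∀ c : Fin n → ℝ, Measure.pi (fun i => gaussianReal (c i) v)
      = Wm.withDensity (fun x => ∏ i, gaussianPDF (c i) v (x i)) := by
    intro c
    rw [show (fun i => gaussianReal (c i) v) = fun i => (volume : Measure ℝ).withDensity
        (gaussianPDF (c i) v) from funext fun i => gaussianReal_of_var_ne_zero _ hv]
    exact pi_withDensity _ _ (fun i => measurable_gaussianPDF _ _)
  set g : (Fin n → ℝ) → ℝ≥0∞ :=
    fun x => ∏ i, gaussianPDF (m i) v (x i) / gaussianPDF (m' i) v (x i) with hgdef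
  have hg : Measurable g :=
    Finset.measurable_prod _ fun i _ =>
      ((measurable_gaussianPDF _ _).comp (measurable_pi_apply i)).div
        ((measurable_gaussianPDF _ _).comp (measurable_pi_apply i))
  have hpQ : Measurable fun x : Fin n → ℝ => ∏ i, gaussianPDF (m' i) v (x i) :=
    Finset.measurable_prod _ fun i _ =>
      (measurable_gaussianPDF _ _).comp (measurable_pi_apply i)
  have hPQ : P = Q.withDensity g := by
    rw [hPdef, hQdef, hpi m, hpi m', ← withDensity_mul _ hpQ hg]
    congr 1
    funext x
    simp only [Pi.mul_apply, hgdef, ← Finset.prod_mul_distrib]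
    refine Finset.prod_congr rfl fun i _ => ?_
    rw [mul_comm, ENNReal.div_mul_cancel (hpos _ _) (htop _ _)]
  have hrn : P.rnDeriv Q =ᵐ[Q] g := by
    rw [hPQ]; exact Measure.rnDeriv_withDensity Q hg
  rw [RenyiBound]
  have step1 : ∫⁻ y, P.rnDeriv Q y ^ α ∂Q = ∫⁻ x, g x ^ α ∂Q :=
    lintegral_congr_ae (hrn.mono fun x hx => by simp only [hx])
  have step2 : ∫⁻ x, g x ^ α ∂Q
      = ∫⁻ x, (∏ i, gaussianPDF (m' i) v (x i)) * g x ^ α ∂Wm := by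
    rw [hQdef, hpi m', lintegral_withDensity_eq_lintegral_mul _ hpQ (hg.pow_const α)]
    rfl
  set c : Fin n → ℝ := fun i => Real.exp (α * (α - 1) * (m i - m' i)^2 / (2 * σ^2)) with hcdef
  have step3 : ∫⁻ x, (∏ i, gaussianPDF (m' i) v (x i)) * g x ^ α ∂Wm
      = (∏ i, ENNReal.ofReal (c i)) *
        ∫⁻ x, ∏ i, gaussianPDF (m' i + α * (m i - m' i)) v (x i) ∂Wm := by
    have hmeas : Measurable fun x : Fin n → ℝ =>
        ∏ i, gaussianPDF (m' i + α * (m i - m' i)) v (x i) :=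
      Finset.measurable_prod _ fun i _ =>
        (measurable_gaussianPDF _ _).comp (measurable_pi_apply i)
    rw [← lintegral_const_mul _ hmeas]
    refine lintegral_congr fun x => ?_
    simp only [hgdef]
    rw [← ENNReal.prod_rpow_of_nonneg hα0.le, ← Finset.prod_mul_distrib,
      ← Finset.prod_mul_distrib]
    exact Finset.prod_congr rfl fun i _ => gaussian_pdf_ratio_pow_ennreal hσ α (m i) (m' i) (x i)
  have step4 : ∫⁻ x, ∏ i, gaussianPDF (m' i + α * (m i - m' i)) v (x i) ∂Wm = 1 := by
    rw [hWdef, lintegral_pi_prod _ _ (fun i => measurable_gaussianPDF _ _)]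
    simp [lintegral_gaussianPDF_eq_one _ hv]
  have hsum : ∑ i, α * (α - 1) * (m i - m' i)^2 / (2 * σ^2)
      = α * (α - 1) * (∑ i, (m i - m' i)^2) / (2 * σ^2) := by
    rw [← Finset.sum_div, ← Finset.mul_sum]
  have hS : ∑ i, (m i - m' i)^2 ≤ W^2 := by
    have h := hsens D D' hDD'
    have hS0 : (0:ℝ) ≤ ∑ i, (m i - m' i)^2 :=
      Finset.sum_nonneg fun i _ => sq_nonneg _
    calc ∑ i, (m i - m' i)^2 = Real.sqrt (∑ i, (m i - m' i)^2) ^ 2 :=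
          (Real.sq_sqrt hS0).symm
      _ ≤ W^2 := pow_le_pow_left₀ (Real.sqrt_nonneg _) h 2
  have hfinal : (∏ i, ENNReal.ofReal (c i))
      ≤ ENNReal.ofReal (Real.exp ((α - 1) * (α * W ^ 2 / (2 * σ ^ 2)))) := by
    rw [← ENNReal.ofReal_prod_of_nonneg fun i _ => (Real.exp_nonneg _),
      ← Real.exp_sum]
    refine ENNReal.ofReal_le_ofReal (Real.exp_le_exp.2 ?_)
    rw [hsum]
    have h1 : α * (α - 1) * (∑ i, (m i - m' i)^2) / (2 * σ^2)
        ≤ α * (α - 1) * W^2 / (2 * σ^2) := by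
      have hnum : α * (α - 1) * (∑ i, (m i - m' i)^2) ≤ α * (α - 1) * W^2 :=
        mul_le_mul_of_nonneg_left hS (mul_nonneg hα0.le (by linarith))
      have h2σ : (0:ℝ) < 2 * σ^2 := by positivity
      exact (div_le_div_iff_of_pos_right h2σ).2 hnum
    calc α * (α - 1) * (∑ i, (m i - m' i)^2) / (2 * σ^2)
        ≤ α * (α - 1) * W^2 / (2 * σ^2) := h1
      _ = (α - 1) * (α * W ^ 2 / (2 * σ ^ 2)) := by ring
  calc ∫⁻ y, P.rnDeriv Q y ^ α ∂Q = ∏ i, ENNReal.ofReal (c i) := by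
        rw [step1, step2, step3, step4, mul_one]
    _ ≤ ENNReal.ofReal (Real.exp ((α - 1) * (α * W ^ 2 / (2 * σ ^ 2)))) := hfinal
end
end

section
/- If mechanism M₁: X → Y is (α,ε₁)-RDP and M₂: X × Y → Z is (α,ε₂)-RDP in its first argument (uniformly over the second), then the composed mechanism M₃(X) = (M₁(X), M₂(X, M₁(X))) is (α, ε₁+ε₂)-RDP. -/
/-!
With `P = μ ⊗ κ` and `Q = ν ⊗ η` the two output laws, Hölder's inequality applied first in `z`
(against `dκ_y/dη_y`) and then in `y` (against `dμ/dν`) gives, for every measurable `φ ≥ 0`,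
`∫ φ dP ≤ (e^{(α-1)ε₁} e^{(α-1)ε₂})^{1/α} ‖φ‖_{L^{α'}(Q)}` with `α'` the conjugate exponent.
Testing this against `φ = h^{α-1}`, `h = dP/dQ` truncated at height `n` so that all integrals
are finite, bounds `∫ h^α dQ`. This never needs a jointly measurable version of
`(y, z) ↦ dκ_y/dη_y (z)`, which need not exist for a general measurable space `Z`.
-/

open MeasureTheory

noncomputable section

open ProbabilityTheory
open scoped ENNReal

namespace ENNReal

lemma rpow_eq_iSup_min_natCast_rpow {p : ℝ} (hp : 0 < p) (a : ℝ≥0∞) :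
    a ^ p = ⨆ n : ℕ, min a n ^ p := by
  have : a = ⨆ n : ℕ, min a n := by rw [← inf_iSup_eq, iSup_natCast, inf_top_eq]
  conv_lhs => rw [this]
  exact (orderIsoRpow p hp).map_iSup _

lemma rpow_le_mul_rpow_sub_one {a b : ℝ≥0∞} {p : ℝ} (hp : 0 < p) (hb : b ≠ ∞) (hba : b ≤ a) :
    b ^ p ≤ a * b ^ (p - 1) := by
  rcases eq_or_ne b 0 with rfl | hb0
  · simp [zero_rpow_of_pos hp]
  calc b ^ p = b * b ^ (p - 1) := by
        conv_lhs => rw [← add_sub_cancel 1 p, rpow_add _ _ hb0 hb, rpow_one]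
    _ ≤ a * b ^ (p - 1) := by gcongr

lemma le_of_le_rpow_mul_rpow {p q : ℝ} (hpq : p.HolderConjugate q) {T C : ℝ≥0∞} (hT : T ≠ ∞)
    (h : T ≤ C ^ (1 / p) * T ^ (1 / q)) : T ≤ C := by
  rcases eq_or_ne T 0 with rfl | hT0
  · exact zero_le
  have hTq0 : T ^ (1 / q) ≠ 0 := by simp [rpow_eq_zero_iff, hT0, hT]
  have hTq : T ^ (1 / q) ≠ ∞ := rpow_ne_top_of_nonneg (by simpa using hpq.symm.nonneg) hT
  have hsplit : T = T ^ (1 / p) * T ^ (1 / q) := by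
    rw [← rpow_add _ _ hT0 hT, one_div, one_div, hpq.inv_add_inv_eq_one, rpow_one]
  have hroot : T ^ (1 / p) ≤ C ^ (1 / p) := by
    refine (ENNReal.mul_le_mul_iff_left hTq0 hTq).mp ?_
    rwa [← hsplit]
  exact (rpow_le_rpow_iff (by simpa using hpq.pos)).mp hroot

end ENNReal

section

variable {Y Z : Type*} [MeasurableSpace Y] [MeasurableSpace Z]

lemma MeasureTheory.Measure.lintegral_rnDeriv_mul_le (μ ν : Measure Y) {f : Y → ℝ≥0∞}
    (hf : Measurable f) : ∫⁻ y, μ.rnDeriv ν y * f y ∂ν ≤ ∫⁻ y, f y ∂μ := by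
  calc ∫⁻ y, μ.rnDeriv ν y * f y ∂ν = ∫⁻ y, f y ∂(ν.withDensity (μ.rnDeriv ν)) :=
        (lintegral_withDensity_eq_lintegral_mul _ (μ.measurable_rnDeriv ν) hf).symm
    _ ≤ ∫⁻ y, f y ∂μ := lintegral_mono' (μ.withDensity_rnDeriv_le ν) le_rfl

lemma lintegral_le_rnDeriv_rpow_mul {μ ν : Measure Y} [μ.HaveLebesgueDecomposition ν]
    (hμν : μ ≪ ν) {p q : ℝ} (hpq : p.HolderConjugate q) {φ : Y → ℝ≥0∞} (hφ : Measurable φ) :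
    ∫⁻ y, φ y ∂μ ≤
      (∫⁻ y, μ.rnDeriv ν y ^ p ∂ν) ^ (1 / p) * (∫⁻ y, φ y ^ q ∂ν) ^ (1 / q) := by
  rw [← lintegral_rnDeriv_mul hμν hφ.aemeasurable]
  exact ENNReal.lintegral_mul_le_Lp_mul_Lq ν hpq (μ.measurable_rnDeriv ν).aemeasurable
    hφ.aemeasurable

lemma lintegral_rnDeriv_rpow_le_of_forall_lintegral_le {P Q : Measure Y} [IsFiniteMeasure Q]
    {p q : ℝ} (hpq : p.HolderConjugate q) {C : ℝ≥0∞}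
    (hC : ∀ φ : Y → ℝ≥0∞, Measurable φ →
      ∫⁻ y, φ y ∂P ≤ C ^ (1 / p) * (∫⁻ y, φ y ^ q ∂Q) ^ (1 / q)) :
    ∫⁻ y, P.rnDeriv Q y ^ p ∂Q ≤ C := by
  set h := P.rnDeriv Q
  have hp : 0 < p := hpq.pos
  have htrunc_meas (n : ℕ) : Measurable fun y => min (h y) n :=
    (P.measurable_rnDeriv Q).min measurable_const
  have htrunc (n : ℕ) : ∫⁻ y, min (h y) n ^ p ∂Q ≤ C := by
    set T := ∫⁻ y, min (h y) n ^ p ∂Q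
    have hT : T ≠ ∞ := by
      refine ne_top_of_le_ne_top (b := ∫⁻ _, (n : ℝ≥0∞) ^ p ∂Q) ?_
        (lintegral_mono fun y => ENNReal.rpow_le_rpow (min_le_right _ _) hp.le)
      simp [lintegral_const, ENNReal.mul_eq_top, hp.le]
    refine ENNReal.le_of_le_rpow_mul_rpow hpq hT ?_
    calc T ≤ ∫⁻ y, h y * min (h y) n ^ (p - 1) ∂Q :=
          lintegral_mono fun y => ENNReal.rpow_le_mul_rpow_sub_one hp
            (ne_top_of_le_ne_top (ENNReal.natCast_ne_top n) (min_le_right _ _)) (min_le_left _ _)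
      _ ≤ ∫⁻ y, min (h y) n ^ (p - 1) ∂P := P.lintegral_rnDeriv_mul_le Q ((htrunc_meas n).pow_const _)
      _ ≤ C ^ (1 / p) * (∫⁻ y, (min (h y) n ^ (p - 1)) ^ q ∂Q) ^ (1 / q) :=
          hC _ ((htrunc_meas n).pow_const _)
      _ = C ^ (1 / p) * T ^ (1 / q) := by simp_rw [← ENNReal.rpow_mul, hpq.sub_one_mul_conj]; rfl
  calc ∫⁻ y, h y ^ p ∂Q = ∫⁻ y, ⨆ n : ℕ, min (h y) n ^ p ∂Q := by
        simp_rw [← ENNReal.rpow_eq_iSup_min_natCast_rpow hp]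
    _ = ⨆ n : ℕ, ∫⁻ y, min (h y) n ^ p ∂Q :=
        lintegral_iSup (fun n => (htrunc_meas n).pow_const _) fun a b hab y =>
          ENNReal.rpow_le_rpow (min_le_min le_rfl (Nat.cast_le.mpr hab)) hp.le
    _ ≤ C := iSup_le htrunc

lemma MeasureTheory.Measure.bind_map_prodMk_eq_compProd
    (μ : Measure Y) [SFinite μ] (κ : Kernel Y Z) [IsSFiniteKernel κ] :
    (μ.bind fun y => (κ y).map (Prod.mk y)) = μ ⊗ₘ κ := by
  rw [Measure.compProd_eq_comp_prod]
  congr with y : 1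
  rw [Kernel.prod_apply, Kernel.id_apply, Measure.dirac_prod]

lemma lintegral_compProd_le_rpow_mul_rpow {μ ν : Measure Y} [SFinite μ] [SigmaFinite ν]
    {κ η : Kernel Y Z} [IsSFiniteKernel κ] [IsFiniteKernel η] (hμν : μ ≪ ν)
    (hκη : ∀ y, κ y ≪ η y) {p q : ℝ} (hpq : p.HolderConjugate q) {A B : ℝ≥0∞}
    (hA : ∫⁻ y, μ.rnDeriv ν y ^ p ∂ν ≤ A)
    (hB : ∀ y, ∫⁻ z, (κ y).rnDeriv (η y) z ^ p ∂(η y) ≤ B)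
    {φ : Y × Z → ℝ≥0∞} (hφ : Measurable φ) :
    ∫⁻ w, φ w ∂(μ ⊗ₘ κ) ≤ (A * B) ^ (1 / p) * (∫⁻ w, φ w ^ q ∂(ν ⊗ₘ η)) ^ (1 / q) := by
  have hp : 0 ≤ 1 / p := by simpa using hpq.nonneg
  set H : Y → ℝ≥0∞ := fun y => ∫⁻ z, φ (y, z) ^ q ∂(η y)
  have hH : Measurable H := (hφ.pow_const q).lintegral_kernel_prod_right
  have hinner (y : Y) : ∫⁻ z, φ (y, z) ∂(κ y) ≤ B ^ (1 / p) * H y ^ (1 / q) :=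
    (lintegral_le_rnDeriv_rpow_mul (hκη y) hpq (hφ.comp measurable_prodMk_left)).trans
      (mul_le_mul_left (ENNReal.rpow_le_rpow (hB y) hp) _)
  have houter : ∫⁻ y, H y ^ (1 / q) ∂μ ≤ A ^ (1 / p) * (∫⁻ y, H y ∂ν) ^ (1 / q) := by
    refine (lintegral_le_rnDeriv_rpow_mul hμν hpq (hH.pow_const _)).trans ?_
    simp_rw [← ENNReal.rpow_mul, one_div_mul_cancel hpq.symm.ne_zero, ENNReal.rpow_one]
    gcongr
  calc ∫⁻ w, φ w ∂(μ ⊗ₘ κ) = ∫⁻ y, ∫⁻ z, φ (y, z) ∂(κ y) ∂μ := Measure.lintegral_compProd hφ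
    _ ≤ ∫⁻ y, B ^ (1 / p) * H y ^ (1 / q) ∂μ := lintegral_mono hinner
    _ = B ^ (1 / p) * ∫⁻ y, H y ^ (1 / q) ∂μ := lintegral_const_mul _ (hH.pow_const _)
    _ ≤ B ^ (1 / p) * (A ^ (1 / p) * (∫⁻ y, H y ∂ν) ^ (1 / q)) := by gcongr
    _ = (A * B) ^ (1 / p) * (∫⁻ w, φ w ^ q ∂(ν ⊗ₘ η)) ^ (1 / q) := by
        rw [Measure.lintegral_compProd (hφ.pow_const q), ENNReal.mul_rpow_of_nonneg _ _ hp]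
        ring

end

/-- Adaptive composition of RDP: if `M₁` is `(α,ε₁)`-RDP and `M₂` is
`(α,ε₂)`-RDP in its first argument (uniformly over the auxiliary input), then
the composed mechanism `M₃(X) = (M₁(X), M₂(X, M₁(X)))` is `(α, ε₁+ε₂)`-RDP. -/
theorem rdp_adaptive_composition {X Y Z : Type*} [MeasurableSpace Y] [MeasurableSpace Z]
    (Neighbor : X → X → Prop)
    (M₁ : X → Measure Y) (M₂ : X → Y → Measure Z)
    (hprob₁ : ∀ x, IsProbabilityMeasure (M₁ x))
    (hprob₂ : ∀ x y, IsProbabilityMeasure (M₂ x y))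
    (hmeas₂ : ∀ x, Measurable (M₂ x))
    (α ε₁ ε₂ : ℝ) (hα : 1 < α)
    (hAC₁ : ∀ x x', Neighbor x x' → M₁ x ≪ M₁ x')
    (hAC₂ : ∀ x x' y, Neighbor x x' → M₂ x y ≪ M₂ x' y)
    (hRDP₁ : ∀ x x', Neighbor x x' → RenyiBound α ε₁ (M₁ x) (M₁ x'))
    (hRDP₂ : ∀ x x' y, Neighbor x x' → RenyiBound α ε₂ (M₂ x y) (M₂ x' y)) :
    ∀ x x', Neighbor x x' →
      RenyiBound α (ε₁ + ε₂)
        ((M₁ x).bind fun y => (M₂ x y).map (Prod.mk y))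
        ((M₁ x').bind fun y => (M₂ x' y).map (Prod.mk y)) := by
  intro x x' hxx'
  have := hprob₁ x
  have := hprob₁ x'
  let κ : Kernel Y Z := ⟨M₂ x, hmeas₂ x⟩
  let η : Kernel Y Z := ⟨M₂ x', hmeas₂ x'⟩
  have : IsMarkovKernel κ := ⟨hprob₂ x⟩
  have : IsMarkovKernel η := ⟨hprob₂ x'⟩
  have hexp : ENNReal.ofReal (Real.exp ((α - 1) * (ε₁ + ε₂))) =
      ENNReal.ofReal (Real.exp ((α - 1) * ε₁)) * ENNReal.ofReal (Real.exp ((α - 1) * ε₂)) := by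
    rw [← ENNReal.ofReal_mul (Real.exp_nonneg _), ← Real.exp_add, ← mul_add]
  change RenyiBound α (ε₁ + ε₂) ((M₁ x).bind fun y => (κ y).map (Prod.mk y))
    ((M₁ x').bind fun y => (η y).map (Prod.mk y))
  rw [RenyiBound, Measure.bind_map_prodMk_eq_compProd, Measure.bind_map_prodMk_eq_compProd, hexp]
  exact lintegral_rnDeriv_rpow_le_of_forall_lintegral_le (.conjExponent hα) fun φ hφ =>
    lintegral_compProd_le_rpow_mul_rpow (hAC₁ x x' hxx') (fun y => hAC₂ x x' y hxx')
      (.conjExponent hα) (hRDP₁ x x' hxx') (fun y => hRDP₂ x x' y hxx') hφ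
end
end
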